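/- Variance bound for k-producible pure states: let r₁, …, r_l be positive integers with Σ_{i=1}^l r_i = N, and let ψ = φ₁ ⊗ φ₂ ⊗ ⋯ ⊗ φ_l, where each φ_i is a unit vector in (ℂ^d)^{⊗r_i}. Then the variance of the collective spin operator satisfies Var_ψ(J^z) ≤ s²·Σ_{i=1}^l r_i², and hence 4·Var_ψ(J^z) ≤ 4s²·Σ_{i=1}^l r_i². -/
import Mathlib


open Matrix Complex

/-- The spin quantum number `s = (d-1)/2` for local dimension `d`. -/
noncomputable def sval (d : ℕ) : ℝ := ((d : ℝ) - 1) / 2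

/-- The magnetic quantum number `m = j - s` attached to the `j`-th basis vector,
so that `m` runs over `-s, -s+1, …, s`. -/
noncomputable def mval (d : ℕ) (j : Fin d) : ℝ := (j : ℝ) - sval d

/-- The spin-`s` operator `S^x`:
`⟨m'|S^x|m⟩ = (δ_{m',m+1} + δ_{m'+1,m}) (1/2) √(s(s+1) - m' m)`. -/
noncomputable def Sx (d : ℕ) : Matrix (Fin d) (Fin d) ℂ := fun j' j =>
  ((if (j' : ℕ) = (j : ℕ) + 1 then 1 else 0) + (if (j' : ℕ) + 1 = (j : ℕ) then 1 else 0)) *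
    (1 / 2) * (Real.sqrt (sval d * (sval d + 1) - mval d j' * mval d j) : ℂ)

/-- The spin-`s` operator `S^y`:
`⟨m'|S^y|m⟩ = (δ_{m',m+1} - δ_{m'+1,m}) (1/(2i)) √(s(s+1) - m' m)`. -/
noncomputable def Sy (d : ℕ) : Matrix (Fin d) (Fin d) ℂ := fun j' j =>
  ((if (j' : ℕ) = (j : ℕ) + 1 then 1 else 0) - (if (j' : ℕ) + 1 = (j : ℕ) then 1 else 0)) *
    (1 / (2 * Complex.I)) * (Real.sqrt (sval d * (sval d + 1) - mval d j' * mval d j) : ℂ)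

/-- The spin-`s` operator `S^z`: `⟨m'|S^z|m⟩ = δ_{m',m} m`. -/
noncomputable def Sz (d : ℕ) : Matrix (Fin d) (Fin d) ℂ := fun j' j =>
  if j' = j then (mval d j : ℂ) else 0

/-- The three spin-`s` matrices `S^x, S^y, S^z`, indexed by `α : Fin 3`. -/
noncomputable def spin (d : ℕ) : Fin 3 → Matrix (Fin d) (Fin d) ℂ := ![Sx d, Sy d, Sz d]

/-- The single-site operator `A_i` acting as `A` on the `i`-th tensor factor of `(ℂ^d)^{⊗N}`
and as the identity on all other factors. -/
noncomputable def siteOp (d N : ℕ) (A : Matrix (Fin d) (Fin d) ℂ) (i : Fin N) :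
    Matrix (Fin N → Fin d) (Fin N → Fin d) ℂ := fun f g =>
  A (f i) (g i) * ∏ j ∈ Finset.univ.erase i, (if f j = g j then 1 else 0)

/-- The collective spin operator `J = Σ_{i=1}^N A_i` on `(ℂ^d)^{⊗N}`. -/
noncomputable def collOp (d N : ℕ) (A : Matrix (Fin d) (Fin d) ℂ) :
    Matrix (Fin N → Fin d) (Fin N → Fin d) ℂ := ∑ i : Fin N, siteOp d N A i

/-- The variance `Var_ψ(A) = ⟨ψ, A²ψ⟩ - ⟨ψ, Aψ⟩²` of an observable `A` in a state `ψ`. -/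
noncomputable def variance {ι : Type*} [Fintype ι] (A : Matrix ι ι ℂ) (ψ : ι → ℂ) : ℂ :=
  star ψ ⬝ᵥ (A * A).mulVec ψ - (star ψ ⬝ᵥ A.mulVec ψ) ^ 2

section Aux

variable {l : ℕ} {G : Fin l → Type} [∀ i, Fintype (G i)]

lemma sum_pi_prod (F : ∀ i, G i → ℝ) :
    ∑ h : ∀ i, G i, ∏ i, F i (h i) = ∏ i, ∑ g, F i g := by
  rw [Finset.prod_univ_sum, Fintype.piFinset_univ]

lemma key_one (q : ∀ i, G i → ℝ) (hq : ∀ i, ∑ g, q i g = 1) (i : Fin l) (Y : G i → ℝ) :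
    ∑ h : ∀ i, G i, (∏ j, q j (h j)) * Y (h i) = ∑ g, q i g * Y g := by
  have hF : ∀ h : ∀ i, G i, (∏ j, q j (h j)) * Y (h i)
      = ∏ j, Function.update q i (fun g => q i g * Y g) j (h j) := by
    intro h
    rw [← Finset.mul_prod_erase Finset.univ
          (fun j => Function.update q i (fun g => q i g * Y g) j (h j)) (Finset.mem_univ i),
        ← Finset.mul_prod_erase Finset.univ (fun j => q j (h j)) (Finset.mem_univ i)]
    simp only [Function.update_self]
    have hrest : ∀ j ∈ Finset.univ.erase i,
        Function.update q i (fun g => q i g * Y g) j (h j) = q j (h j) := by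
      intro j hj
      rw [Function.update_of_ne (Finset.ne_of_mem_erase hj)]
    rw [Finset.prod_congr rfl hrest]; ring
  simp_rw [hF]
  rw [sum_pi_prod, ← Finset.mul_prod_erase Finset.univ
        (fun j => ∑ g, Function.update q i (fun g => q i g * Y g) j g) (Finset.mem_univ i)]
  simp only [Function.update_self]
  have hrest : ∀ j ∈ Finset.univ.erase i,
      (∑ g, Function.update q i (fun g => q i g * Y g) j g) = 1 := by
    intro j hj
    rw [Function.update_of_ne (Finset.ne_of_mem_erase hj)]
    exact hq j
  rw [Finset.prod_congr rfl hrest, Finset.prod_const_one, mul_one]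

lemma key_two (q : ∀ i, G i → ℝ) (hq : ∀ i, ∑ g, q i g = 1) {i j : Fin l} (hij : i ≠ j)
    (Y : G i → ℝ) (Z : G j → ℝ) :
    ∑ h : ∀ i, G i, (∏ k, q k (h k)) * (Y (h i) * Z (h j))
      = (∑ g, q i g * Y g) * (∑ g, q j g * Z g) := by
  set F := Function.update (Function.update q i (fun g => q i g * Y g)) j
      (fun g => q j g * Z g) with hFdef
  have hFi : F i = fun g => q i g * Y g := by
    rw [hFdef, Function.update_of_ne hij, Function.update_self]
  have hFj : F j = fun g => q j g * Z g := by
    rw [hFdef, Function.update_self]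
  have hFk : ∀ k, k ≠ i → k ≠ j → F k = q k := by
    intro k hki hkj
    rw [hFdef, Function.update_of_ne hkj, Function.update_of_ne hki]
  have extract : ∀ c : Fin l → ℝ,
      ∏ k, c k = c i * (c j * ∏ k ∈ (Finset.univ.erase i).erase j, c k) := by
    intro c
    rw [Finset.mul_prod_erase (Finset.univ.erase i) c
        (Finset.mem_erase.mpr ⟨hij.symm, Finset.mem_univ j⟩),
      Finset.mul_prod_erase Finset.univ c (Finset.mem_univ i)]
  have hF : ∀ h : ∀ i, G i, (∏ k, q k (h k)) * (Y (h i) * Z (h j)) = ∏ k, F k (h k) := by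
    intro h
    rw [extract (fun k => F k (h k)), extract (fun k => q k (h k))]
    simp only [hFi, hFj]
    have hrest : ∀ k ∈ (Finset.univ.erase i).erase j, F k (h k) = q k (h k) := by
      intro k hk
      have hk1 := Finset.mem_erase.mp hk
      have hk2 := Finset.mem_erase.mp hk1.2
      rw [hFk k hk2.1 hk1.1]
    rw [Finset.prod_congr rfl hrest]; ring
  simp_rw [hF]
  rw [sum_pi_prod, extract (fun k => ∑ g, F k g)]
  simp only [hFi, hFj]
  have hrest : ∀ k ∈ (Finset.univ.erase i).erase j, (∑ g, F k g) = 1 := by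
    intro k hk
    have hk1 := Finset.mem_erase.mp hk
    have hk2 := Finset.mem_erase.mp hk1.2
    rw [hFk k hk2.1 hk1.1]
    exact hq k
  rw [Finset.prod_congr rfl hrest, Finset.prod_const_one, mul_one]

lemma var_sum_le (q X : ∀ i, G i → ℝ) (b : Fin l → ℝ)
    (hq0 : ∀ i g, 0 ≤ q i g) (hq1 : ∀ i, ∑ g, q i g = 1)
    (hX : ∀ i g, |X i g| ≤ b i) :
    (∑ h : ∀ i, G i, (∏ i, q i (h i)) * (∑ i, X i (h i)) ^ 2)
      - (∑ h : ∀ i, G i, (∏ i, q i (h i)) * (∑ i, X i (h i))) ^ 2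
      ≤ ∑ i, b i ^ 2 := by
  set E : Fin l → ℝ := fun i => ∑ g, q i g * X i g with hE
  set E2 : Fin l → ℝ := fun i => ∑ g, q i g * X i g ^ 2 with hE2
  have h1 : (∑ h : ∀ i, G i, (∏ i, q i (h i)) * (∑ i, X i (h i))) = ∑ i, E i := by
    have hpt : ∀ h : ∀ i, G i, (∏ i, q i (h i)) * (∑ i, X i (h i))
        = ∑ i, (∏ j, q j (h j)) * X i (h i) := fun h => Finset.mul_sum _ _ _
    simp_rw [hpt]
    rw [Finset.sum_comm]
    exact Finset.sum_congr rfl fun i _ => key_one q hq1 i (X i)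
  have h2 : (∑ h : ∀ i, G i, (∏ i, q i (h i)) * (∑ i, X i (h i)) ^ 2)
      = ∑ i, ∑ j, (if i = j then E2 i else E i * E j) := by
    have hpt : ∀ h : ∀ i, G i, (∏ i, q i (h i)) * (∑ i, X i (h i)) ^ 2
        = ∑ i, ∑ j, (∏ k, q k (h k)) * (X i (h i) * X j (h j)) := by
      intro h
      rw [sq, Finset.sum_mul_sum, Finset.mul_sum]
      refine Finset.sum_congr rfl fun i _ => ?_
      rw [Finset.mul_sum]
    simp_rw [hpt]
    rw [Finset.sum_comm]
    refine Finset.sum_congr rfl fun i _ => ?_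
    rw [Finset.sum_comm]
    refine Finset.sum_congr rfl fun j _ => ?_
    by_cases hij : i = j
    · subst hij
      rw [if_pos rfl]
      simp only [hE2]
      simp_rw [pow_two]
      exact key_one q hq1 i (fun g => X i g * X i g)
    · rw [if_neg hij]
      exact key_two q hq1 hij (X i) (X j)
  rw [h1, h2, sq (∑ i, E i), Finset.sum_mul_sum, ← Finset.sum_sub_distrib]
  have h4 : ∀ i : Fin l, ((∑ j, (if i = j then E2 i else E i * E j)) - (∑ j, E i * E j))
      = E2 i - E i ^ 2 := by
    intro i
    rw [← Finset.sum_sub_distrib, Finset.sum_eq_single i]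
    · simp [sq]
    · intro j _ hji
      rw [if_neg (Ne.symm hji)]
      ring
    · intro hni
      exact absurd (Finset.mem_univ i) hni
  calc ∑ i, ((∑ j, (if i = j then E2 i else E i * E j)) - (∑ j, E i * E j))
      = ∑ i, (E2 i - E i ^ 2) := Finset.sum_congr rfl fun i _ => h4 i
    _ ≤ ∑ i, b i ^ 2 := by
      apply Finset.sum_le_sum
      intro i _
      have hE2b : E2 i ≤ b i ^ 2 := by
        calc E2 i ≤ ∑ g, q i g * b i ^ 2 := by
              apply Finset.sum_le_sum
              intro g _
              apply mul_le_mul_of_nonneg_left _ (hq0 i g)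
              calc X i g ^ 2 = |X i g| ^ 2 := (_root_.sq_abs _).symm
                _ ≤ b i ^ 2 := pow_le_pow_left₀ (abs_nonneg _) (hX i g) 2
          _ = b i ^ 2 := by rw [← Finset.sum_mul, hq1 i, one_mul]
      nlinarith [sq_nonneg (E i)]

end Aux

open scoped ComplexOrder in
/-- Variance bound for `k`-producible pure states: if `ψ = φ₁ ⊗ ⋯ ⊗ φ_l` is a product (under
a grouping of the `N` sites into blocks of sizes `r₁, …, r_l` with `Σᵢ rᵢ = N`) of unit
vectors `φᵢ ∈ (ℂ^d)^{⊗rᵢ}`, then `Var_ψ(J^z) ≤ s² Σᵢ rᵢ²` and hence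
`4·Var_ψ(J^z) ≤ 4s² Σᵢ rᵢ²`. -/
theorem variance_k_producible_le (d N l : ℕ) (hd : 2 ≤ d) (hN : 1 ≤ N)
    (r : Fin l → ℕ) (hr : ∀ i, 1 ≤ r i) (hsum : ∑ i, r i = N)
    (e : Fin N ≃ (Σ i : Fin l, Fin (r i)))
    (φ : (i : Fin l) → ((Fin (r i) → Fin d) → ℂ))
    (hφ : ∀ i, star (φ i) ⬝ᵥ φ i = 1) :
    let ψ : (Fin N → Fin d) → ℂ := fun f => ∏ i : Fin l, φ i (fun j => f (e.symm ⟨i, j⟩))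
    variance (collOp d N (Sz d)) ψ
      ≤ (((sval d) ^ 2 * ∑ i : Fin l, ((r i : ℝ)) ^ 2 : ℝ) : ℂ) ∧
    4 * variance (collOp d N (Sz d)) ψ
      ≤ ((4 * (sval d) ^ 2 * ∑ i : Fin l, ((r i : ℝ)) ^ 2 : ℝ) : ℂ) := by
  intro ψ
  -- Step 1: collOp is diagonal
  have hdiag : collOp d N (Sz d)
      = Matrix.diagonal (fun f : Fin N → Fin d => ((∑ k, mval d (f k) : ℝ) : ℂ)) := by
    ext f g
    by_cases hfg : f = g
    · subst hfg
      simp [collOp, Matrix.sum_apply, siteOp, Sz, Matrix.diagonal_apply_eq]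
    · obtain ⟨k, hk⟩ : ∃ k, f k ≠ g k := by
        by_contra h; push_neg at h; exact hfg (funext h)
      rw [Matrix.diagonal_apply_ne _ hfg, collOp, Matrix.sum_apply]
      apply Finset.sum_eq_zero
      intro i _
      show Sz d (f i) (g i) * ∏ j ∈ Finset.univ.erase i, (if f j = g j then 1 else 0) = 0
      by_cases hik : i = k
      · subst hik
        apply mul_eq_zero_of_left
        simp [Sz, hk]
      · apply mul_eq_zero_of_right
        apply Finset.prod_eq_zero (Finset.mem_erase.mpr ⟨Ne.symm hik, Finset.mem_univ k⟩)
        rw [if_neg hk]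
  -- Step 2: variance via real sums
  have hdot : ∀ (c : (Fin N → Fin d) → ℝ),
      star ψ ⬝ᵥ (Matrix.diagonal (fun f => ((c f : ℝ) : ℂ))).mulVec ψ
        = ((∑ f, Complex.normSq (ψ f) * c f : ℝ) : ℂ) := by
    intro c
    rw [dotProduct, Complex.ofReal_sum]
    refine Finset.sum_congr rfl fun f _ => ?_
    rw [Matrix.mulVec_diagonal, Pi.star_apply]
    rw [Complex.star_def,
        show (starRingEnd ℂ) (ψ f) * ((c f : ℂ) * ψ f)
        = (c f : ℂ) * (ψ f * (starRingEnd ℂ) (ψ f)) from by ring, Complex.mul_conj]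
    push_cast; ring
  have hvar : variance (collOp d N (Sz d)) ψ
      = (((∑ f, Complex.normSq (ψ f) * (∑ k, mval d (f k)) ^ 2)
          - (∑ f, Complex.normSq (ψ f) * (∑ k, mval d (f k))) ^ 2 : ℝ) : ℂ) := by
    rw [variance, hdiag, Matrix.diagonal_mul_diagonal]
    have hsq : (fun f : Fin N → Fin d =>
          ((∑ k, mval d (f k) : ℝ) : ℂ) * ((∑ k, mval d (f k) : ℝ) : ℂ))
        = fun f => ((((∑ k, mval d (f k)) ^ 2 : ℝ)) : ℂ) := by
      funext f; push_cast; ring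
    rw [hsq, hdot, hdot]
    push_cast; ring
  -- Step 3: change of variables
  let Epi : (∀ i : Fin l, Fin (r i) → Fin d) ≃ (Fin N → Fin d) :=
    { toFun := fun h k => h (e k).1 (e k).2
      invFun := fun f i j => f (e.symm ⟨i, j⟩)
      left_inv := by
        intro h; funext i j
        show h (e (e.symm ⟨i, j⟩)).1 (e (e.symm ⟨i, j⟩)).2 = h i j
        rw [e.apply_symm_apply]
      right_inv := by
        intro f; funext k
        show f (e.symm ⟨(e k).1, (e k).2⟩) = f k
        rw [Sigma.eta, e.symm_apply_apply] }
  set q : ∀ i : Fin l, (Fin (r i) → Fin d) → ℝ :=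
    fun i g => Complex.normSq (φ i g) with hqdef
  set X : ∀ i : Fin l, (Fin (r i) → Fin d) → ℝ :=
    fun i g => ∑ j, mval d (g j) with hXdef
  have hEpi1 : ∀ (h : ∀ i : Fin l, Fin (r i) → Fin d) (i : Fin l),
      (fun j => (Epi h) (e.symm ⟨i, j⟩)) = h i := by
    intro h i; funext j
    show h (e (e.symm ⟨i, j⟩)).1 (e (e.symm ⟨i, j⟩)).2 = h i j
    rw [e.apply_symm_apply]
  have hψ : ∀ h : ∀ i : Fin l, Fin (r i) → Fin d, ψ (Epi h) = ∏ i, φ i (h i) := by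
    intro h
    show (∏ i, φ i fun j => (Epi h) (e.symm ⟨i, j⟩)) = _
    exact Finset.prod_congr rfl fun i _ => by rw [hEpi1]
  have hnormSq : ∀ h : ∀ i : Fin l, Fin (r i) → Fin d,
      Complex.normSq (ψ (Epi h)) = ∏ i, q i (h i) := by
    intro h
    rw [hψ]
    exact map_prod (Complex.normSq : ℂ →*₀ ℝ) _ _
  have hEpi2 : ∀ h : ∀ i : Fin l, Fin (r i) → Fin d,
      (∑ k, mval d (Epi h k)) = ∑ i, X i (h i) := by
    intro h
    rw [← Equiv.sum_comp e.symm (fun k => mval d (Epi h k))]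
    have hx : ∀ x : Σ i : Fin l, Fin (r i),
        mval d (Epi h (e.symm x)) = mval d (h x.1 x.2) := by
      intro x
      show mval d (h (e (e.symm x)).1 (e (e.symm x)).2) = _
      rw [e.apply_symm_apply]
    simp_rw [hx]
    rw [← Finset.univ_sigma_univ, Finset.sum_sigma]
  -- q properties
  have hq0 : ∀ i g, 0 ≤ q i g := fun i g => Complex.normSq_nonneg _
  have hq1 : ∀ i, ∑ g, q i g = 1 := by
    intro i
    have h := hφ i
    rw [dotProduct] at h
    have hterm : ∀ g, (star (φ i)) g * φ i g = ((q i g : ℝ) : ℂ) := by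
      intro g
      rw [Pi.star_apply, Complex.star_def, mul_comm, Complex.mul_conj]
    rw [Finset.sum_congr rfl (fun g _ => hterm g), ← Complex.ofReal_sum] at h
    exact_mod_cast h
  -- X bound
  have hmval : ∀ j : Fin d, |mval d j| ≤ sval d := by
    intro j
    rw [abs_le, mval, sval]
    have h0 : (0 : ℝ) ≤ (j : ℝ) := Nat.cast_nonneg _
    have h1 : (j : ℝ) ≤ (d : ℝ) - 1 := by
      have hj : (j : ℕ) + 1 ≤ d := j.is_lt
      have : ((j : ℕ) : ℝ) + 1 ≤ (d : ℝ) := by exact_mod_cast hj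
      linarith
    constructor <;> linarith
  have hX : ∀ i g, |X i g| ≤ sval d * (r i : ℝ) := by
    intro i g
    calc |X i g| ≤ ∑ j, |mval d (g j)| := Finset.abs_sum_le_sum_abs _ _
      _ ≤ ∑ _j : Fin (r i), sval d := Finset.sum_le_sum fun j _ => hmval _
      _ = sval d * (r i : ℝ) := by
          rw [Finset.sum_const, Finset.card_univ, Fintype.card_fin, nsmul_eq_mul]; ring
  -- main bound
  have hmain : (∑ f, Complex.normSq (ψ f) * (∑ k, mval d (f k)) ^ 2)
      - (∑ f, Complex.normSq (ψ f) * (∑ k, mval d (f k))) ^ 2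
      ≤ sval d ^ 2 * ∑ i, (r i : ℝ) ^ 2 := by
    rw [← Equiv.sum_comp Epi (fun f => Complex.normSq (ψ f) * (∑ k, mval d (f k)) ^ 2),
        ← Equiv.sum_comp Epi (fun f => Complex.normSq (ψ f) * (∑ k, mval d (f k)))]
    beta_reduce
    simp_rw [hnormSq, hEpi2]
    calc (∑ h : ∀ i : Fin l, Fin (r i) → Fin d, (∏ i, q i (h i)) * (∑ i, X i (h i)) ^ 2)
        - (∑ h : ∀ i : Fin l, Fin (r i) → Fin d, (∏ i, q i (h i)) * (∑ i, X i (h i))) ^ 2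
        ≤ ∑ i, (sval d * (r i : ℝ)) ^ 2 :=
          var_sum_le q X (fun i => sval d * (r i : ℝ)) hq0 hq1 hX
      _ = sval d ^ 2 * ∑ i, (r i : ℝ) ^ 2 := by
          rw [Finset.mul_sum]
          exact Finset.sum_congr rfl fun i _ => by ring
  constructor
  · rw [hvar]
    exact Complex.real_le_real.mpr hmain
  · rw [hvar, show ((4 : ℂ)) = (((4 : ℝ)) : ℂ) from by norm_num,
        ← Complex.ofReal_mul]
    refine Complex.real_le_real.mpr ?_
    rw [mul_assoc]
    linarith
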